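/- arXiv:2312.11105 — 2 statements merged into one kernel-verified Lean document; each statement's English description precedes it below -/
import Mathlib

section
/- Let (x_n) be a sequence in [0,1) and suppose there exist Z ∈ ℕ, γ > 0 and infinitely many N such that the finite point set x_1,...,x_N has at most Z distinct gap lengths (distances between neighboring elements in the ordered set, including the wrap-around gap). Then for every k ≥ 2, the sequence does not have (k,1)-Poissonian box correlations. -/
/-!
Fix `N` for which the points have at most `Z` gap lengths, and sort them. The cyclic gaps sum
to at most `1`, so some gap length `d` occurs at least `N / Z` times, and `N d ≤ Z`. By Markov's
inequality, for all but `N / (2 Z)` indices `i` the `m` gaps following `x_i` sum to at most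
`S / N`, where `S = 2 m Z`. For each of the remaining (at least `N / (2 Z)`) indices whose gap
is `d`, the tuple of the `m + 1` consecutive points starting at `x_i` lies in the box
`(s, S, …, S) / N` exactly when `s ≥ N d`. Hence `R_{m+1}(s, S, …, S, N)` jumps by at least
`1 / (2 Z)` as `s` crosses some `t_N ∈ [0, Z]`. Near a cluster point `t` of the `t_N` this
contradicts the convergence of `R_{m+1}(s, S, …, S, N)` to `2 s (2 S)^(m-1)`, which is
continuous in `s`.
-/

open MeasureTheory Filter
open scoped Classical

/-- Distance of a real number to the nearest integer. -/
noncomputable def nid (x : ℝ) : ℝ := |x - round x|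

/-- The correlation counting statistic `R_{k,β}(s_1,…,s_{k-1},N)` with `k = m+1`. -/
noncomputable def Rcorr (x : ℕ → ℝ) (m : ℕ) (β : ℝ) (s : Fin m → ℝ) (N : ℕ) : ℝ :=
  ((Finset.univ.filter (fun i : Fin (m + 1) → Fin N =>
      Function.Injective i ∧
        ∀ l : Fin m, nid (x (i l.castSucc) - x (i (Fin.last m))) ≤ s l / (N : ℝ) ^ β)).card : ℝ)
    / (N : ℝ) ^ ((m + 1 : ℝ) - m * β)

/-- The point set `x_1,…,x_N` has at most `Z` distinct gap lengths: for some ordering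
`x_{σ(0)} ≤ ⋯ ≤ x_{σ(N-1)}` of the points, the set of distances between neighboring
elements (including the wrap-around gap) has at most `Z` elements. -/
def AtMostZGaps (x : ℕ → ℝ) (N Z : ℕ) : Prop :=
  ∃ σ : Equiv.Perm (Fin N),
    (∀ i j : Fin N, i ≤ j → x (σ i) ≤ x (σ j)) ∧
    Set.ncard {d : ℝ |
      (∃ i j : Fin N, (j : ℕ) = (i : ℕ) + 1 ∧ d = nid (x (σ j) - x (σ i))) ∨
      (∃ i j : Fin N, (i : ℕ) = 0 ∧ (j : ℕ) = N - 1 ∧ d = nid (x (σ i) - x (σ j)))} ≤ Z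

open Finset

lemma nid_nonneg (x : ℝ) : 0 ≤ nid x := abs_nonneg _

lemma nid_le_abs_sub_intCast (x : ℝ) (z : ℤ) : nid x ≤ |x - z| := round_le x z

lemma nid_le_abs (x : ℝ) : nid x ≤ |x| := by simpa using nid_le_abs_sub_intCast x 0

lemma nid_add_le (a b : ℝ) : nid (a + b) ≤ nid a + nid b :=
  calc nid (a + b) ≤ |a + b - ((round a + round b : ℤ) : ℝ)| := nid_le_abs_sub_intCast _ _
    _ = |(a - round a) + (b - round b)| := by push_cast; ring_nf
    _ ≤ nid a + nid b := abs_add_le _ _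

lemma nid_sub_le_add (a b c : ℝ) : nid (a - c) ≤ nid (a - b) + nid (b - c) := by
  simpa using nid_add_le (a - b) (b - c)

/-- On `Fin (n + 1)` the successor `i + 1` wraps around, so these are the cyclic gaps
of the point set, including `nid (y 0 - y (Fin.last n))`. -/
noncomputable def gap {G : Type*} [Add G] [One G] (y : G → ℝ) (i : G) : ℝ :=
  nid (y (i + 1) - y i)

section gap

variable {G : Type*} (y : G → ℝ)

lemma gap_nonneg [Add G] [One G] (i : G) : 0 ≤ gap y i := nid_nonneg _

lemma nid_sub_le_sum_gap [AddMonoidWithOne G] (i : G) (k : ℕ) :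
    nid (y (i + k) - y i) ≤ ∑ l ∈ range k, gap y (i + l) := by
  induction k with
  | zero => simp [nid]
  | succ k ih =>
    have h := nid_sub_le_add (y (i + k + 1)) (y (i + k)) (y i)
    rw [sum_range_succ, Nat.cast_succ, ← add_assoc]
    unfold gap at *
    linarith

lemma sum_sum_range_gap [Fintype G] [AddGroupWithOne G] (k : ℕ) :
    ∑ i, ∑ l ∈ range k, gap y (i + l) = k * ∑ i, gap y i := by
  rw [sum_comm]
  calc ∑ l ∈ range k, ∑ i, gap y (i + l) = ∑ l ∈ range k, ∑ i, gap y i :=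
        sum_congr rfl fun l _ => Fintype.sum_equiv (Equiv.addRight (l : G)) _ _ fun _ => rfl
    _ = k * ∑ i, gap y i := by rw [sum_const, card_range, nsmul_eq_mul]

end gap

lemma sum_gap_le_one {n : ℕ} {y : Fin (n + 1) → ℝ} (hy : Monotone y) (hy0 : ∀ i, 0 ≤ y i)
    (hy1 : ∀ i, y i < 1) : ∑ i, gap y i ≤ 1 := by
  have hstep (j : Fin n) : gap y j.castSucc ≤ y j.succ - y j.castSucc := by
    unfold gap
    rw [Fin.coeSucc_eq_succ]
    exact (nid_le_abs _).trans_eq (abs_of_nonneg (sub_nonneg.2 (hy j.castSucc_le_succ)))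
  have hlast : gap y (Fin.last n) ≤ y 0 - y (Fin.last n) + 1 := by
    unfold gap
    rw [Fin.last_add_one]
    calc nid (y 0 - y (Fin.last n)) ≤ |y 0 - y (Fin.last n) - ((-1 : ℤ) : ℝ)| :=
          nid_le_abs_sub_intCast _ _
      _ = y 0 - y (Fin.last n) + 1 := by
          rw [Int.cast_neg, Int.cast_one, sub_neg_eq_add]
          exact abs_of_nonneg (by linarith [hy0 0, hy1 (Fin.last n)])
  have htelescope : ∑ j : Fin n, (y j.succ - y j.castSucc) = y (Fin.last n) - y 0 := by
    rw [sum_sub_distrib]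
    linarith [Fin.sum_univ_succ y, Fin.sum_univ_castSucc y]
  rw [Fin.sum_univ_castSucc]
  linarith [sum_le_sum fun j (_ : j ∈ univ) => hstep j]

lemma AtMostZGaps.exists_monotone {x : ℕ → ℝ} {n Z : ℕ} (h : AtMostZGaps x (n + 1) Z) :
    ∃ σ : Equiv.Perm (Fin (n + 1)), Monotone (fun i => x (σ i)) ∧
      #(univ.image (gap fun i => x (σ i))) ≤ Z := by
  obtain ⟨σ, hsort, hcard⟩ := h
  refine ⟨σ, fun i j hij => hsort i j hij, le_trans ?_ hcard⟩
  rw [← Set.ncard_coe_finset, coe_image, coe_univ, Set.image_univ]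
  refine Set.ncard_le_ncard ?_ ((Set.finite_range
    fun p : Fin (n + 1) × Fin (n + 1) => nid (x (σ p.1) - x (σ p.2))).subset ?_)
  · rintro _ ⟨i, rfl⟩
    induction i using Fin.lastCases with
    | last => exact Or.inr ⟨0, Fin.last n, rfl, rfl, by simp [gap, Fin.last_add_one]⟩
    | cast j => exact Or.inl ⟨j.castSucc, j.succ, rfl, by simp [gap, Fin.coeSucc_eq_succ]⟩
  · rintro d (⟨i, j, -, rfl⟩ | ⟨i, j, -, -, rfl⟩)
    exacts [⟨(j, i), rfl⟩, ⟨(i, j), rfl⟩]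

lemma AtMostZGaps.pos {x : ℕ → ℝ} {N Z : ℕ} (h : AtMostZGaps x N Z) (hN : 0 < N) : 0 < Z := by
  obtain ⟨n, rfl⟩ : ∃ n, N = n + 1 := ⟨N - 1, by omega⟩
  obtain ⟨σ, -, hcard⟩ := h.exists_monotone
  exact lt_of_lt_of_le (card_pos.2 (univ_nonempty.image _)) hcard

noncomputable def boxTuples {N : ℕ} (y : Fin N → ℝ) (m : ℕ) (s : Fin m → ℝ) :
    Finset (Fin (m + 1) → Fin N) :=
  {τ | Function.Injective τ ∧ ∀ l : Fin m, nid (y (τ l.castSucc) - y (τ (Fin.last m))) ≤ s l}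

lemma Rcorr_one_eq (x : ℕ → ℝ) (m : ℕ) (s : Fin m → ℝ) (N : ℕ) :
    Rcorr x m 1 s N = #(boxTuples (fun i : Fin N => x i) m fun l => s l / N) / N := by
  simp only [Rcorr, boxTuples, Real.rpow_one, mul_one, add_sub_cancel_left]

section boxTuples

variable {N : ℕ} {y : Fin N → ℝ} {m : ℕ}

@[simp]
lemma mem_boxTuples {s : Fin m → ℝ} {τ : Fin (m + 1) → Fin N} :
    τ ∈ boxTuples y m s ↔
      Function.Injective τ ∧ ∀ l, nid (y (τ l.castSucc) - y (τ (Fin.last m))) ≤ s l := by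
  simp [boxTuples]

lemma boxTuples_mono {s s' : Fin m → ℝ} (h : s ≤ s') : boxTuples y m s ⊆ boxTuples y m s' :=
  fun τ hτ => by
    rw [mem_boxTuples] at hτ ⊢
    exact ⟨hτ.1, fun l => (hτ.2 l).trans (h l)⟩

lemma card_boxTuples_comp_perm (σ : Equiv.Perm (Fin N)) (s : Fin m → ℝ) :
    #(boxTuples (fun i => y (σ i)) m s) = #(boxTuples y m s) := by
  refine card_nbij' (σ ∘ ·) (σ.symm ∘ ·) ?_ ?_ ?_ ?_ <;> intro τ <;> simp [funext_iff]

end boxTuples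

section consecutiveTuple

open Fin.CommRing

variable {N : ℕ} [NeZero N]

def consecutiveTuple (m : ℕ) (i : Fin N) : Fin (m + 1) → Fin N :=
  Fin.snoc (fun j : Fin m => i + ((j + 1 : ℕ) : Fin N)) i

@[simp]
lemma consecutiveTuple_last (m : ℕ) (i : Fin N) : consecutiveTuple m i (Fin.last m) = i :=
  Fin.snoc_last _ _

lemma consecutiveTuple_castSucc {m : ℕ} (i : Fin N) (j : Fin m) :
    consecutiveTuple m i j.castSucc = i + ((j + 1 : ℕ) : Fin N) :=
  Fin.snoc_castSucc _ _ _

lemma consecutiveTuple_injective {m : ℕ} (hm : m < N) (i : Fin N) :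
    Function.Injective (consecutiveTuple m i) := by
  have hcast_inj (a b : ℕ) (ha : a < N) (hb : b < N) (h : (a : Fin N) = b) : a = b := by
    simpa [Fin.val_cast_of_lt ha, Fin.val_cast_of_lt hb] using congrArg Fin.val h
  refine Fin.snoc_injective_iff.2 ⟨fun j j' h => ?_, ?_⟩
  · exact Fin.ext (by have := hcast_inj _ _ (by omega) (by omega) (add_left_cancel h); omega)
  · rintro ⟨j, hj⟩
    have hj' : i + ((j + 1 : ℕ) : Fin N) = i := hj
    have := hcast_inj (j + 1) 0 (by omega) (by omega) (by simpa using add_eq_left.1 hj')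
    omega

lemma nid_consecutiveTuple_zero (y : Fin N → ℝ) (m : ℕ) (i : Fin N) :
    nid (y (consecutiveTuple (m + 1) i (0 : Fin (m + 1)).castSucc) -
      y (consecutiveTuple (m + 1) i (Fin.last (m + 1)))) = gap y i := by
  rw [consecutiveTuple_castSucc, consecutiveTuple_last]
  simp [gap]

lemma nid_consecutiveTuple_le (y : Fin N → ℝ) {m : ℕ} (i : Fin N) (j : Fin m) :
    nid (y (consecutiveTuple m i j.castSucc) - y (consecutiveTuple m i (Fin.last m))) ≤
      ∑ l ∈ range m, gap y (i + l) := by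
  rw [consecutiveTuple_castSucc, consecutiveTuple_last]
  exact (nid_sub_le_sum_gap y i _).trans (sum_le_sum_of_subset_of_nonneg
    (range_subset_range.2 j.isLt) fun _ _ _ => gap_nonneg y _)

/-- For `i ∈ A`, the tuple `consecutiveTuple (k + 1) i` lies in the box `s'` but not in `s`. -/
lemma card_boxTuples_add_card_le {y : Fin N → ℝ} {k : ℕ} (hk : k + 1 < N)
    {s s' : Fin (k + 1) → ℝ} (hs : s ≤ s') (A : Finset (Fin N))
    (hA : ∀ i ∈ A, s 0 < gap y i ∧ gap y i ≤ s' 0 ∧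
      ∀ j : Fin k, ∑ l ∈ range (k + 1), gap y (i + l) ≤ s' j.succ) :
    #(boxTuples y (k + 1) s) + #A ≤ #(boxTuples y (k + 1) s') := by
  set T := consecutiveTuple (N := N) (k + 1)
  have hT_mem (i : Fin N) (hi : i ∈ A) : T i ∈ boxTuples y (k + 1) s' := by
    refine mem_boxTuples.2 ⟨consecutiveTuple_injective hk i, Fin.cases ?_ fun j => ?_⟩
    · exact (nid_consecutiveTuple_zero y k i).trans_le (hA i hi).2.1
    · exact (nid_consecutiveTuple_le y i j.succ).trans ((hA i hi).2.2 j)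
  have hT_not_mem (i : Fin N) (hi : i ∈ A) : T i ∉ boxTuples y (k + 1) s := fun h =>
    ((hA i hi).1.trans_le ((nid_consecutiveTuple_zero y k i).symm.trans_le
      ((mem_boxTuples.1 h).2 0))).false
  calc #(boxTuples y (k + 1) s) + #A = #(boxTuples y (k + 1) s ∪ A.image T) := by
        rw [card_union_of_disjoint, card_image_of_injective]
        · exact fun i i' h => by simpa [T] using congrFun h (Fin.last (k + 1))
        · exact disjoint_right.2 fun τ hτ => by
            obtain ⟨i, hi, rfl⟩ := mem_image.1 hτ
            exact hT_not_mem i hi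
    _ ≤ #(boxTuples y (k + 1) s') :=
        card_le_card <| union_subset (boxTuples_mono hs) fun τ hτ => by
          obtain ⟨i, hi, rfl⟩ := mem_image.1 hτ
          exact hT_mem i hi

end consecutiveTuple

lemma exists_frequent_value_of_sum_le_one {ι : Type*} [Fintype ι] [Nonempty ι] {g : ι → ℝ}
    (hg0 : ∀ i, 0 ≤ g i) (hg1 : ∑ i, g i ≤ 1) {Z : ℕ} (hZ : #(univ.image g) ≤ Z) :
    ∃ d, 0 ≤ d ∧ (Fintype.card ι : ℝ) * d ≤ Z ∧ (Fintype.card ι : ℝ) / Z ≤ #{i | g i = d} := by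
  have hZpos : (0 : ℝ) < Z := by exact_mod_cast (card_pos.2 (univ_nonempty.image g)).trans_le hZ
  obtain ⟨d, hd, hcard⟩ := exists_le_card_fiber_of_nsmul_le_card_of_maps_to
    (fun i _ => mem_image_of_mem g (mem_univ i)) (univ_nonempty.image g)
    (b := (Fintype.card ι : ℝ) / Z) <| by
      rw [nsmul_eq_mul, card_univ]
      calc (#(univ.image g) : ℝ) * (Fintype.card ι / Z) ≤ Z * (Fintype.card ι / Z) := by
            gcongr
        _ = Fintype.card ι := mul_div_cancel₀ _ hZpos.ne'
  obtain ⟨i, -, rfl⟩ := mem_image.1 hd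
  refine ⟨g i, hg0 i, ?_, hcard⟩
  have hfiber : #{j | g j = g i} * g i ≤ 1 :=
    calc #{j | g j = g i} * g i = ∑ j ∈ {j | g j = g i}, g j := by
          rw [sum_congr rfl fun j hj => (mem_filter.1 hj).2, sum_const, nsmul_eq_mul]
      _ ≤ ∑ j, g j := sum_le_sum_of_subset_of_nonneg (subset_univ _) fun j _ _ => hg0 j
      _ ≤ 1 := hg1
  have h := mul_le_mul_of_nonneg_right hcard (hg0 i)
  rw [div_mul_eq_mul_div, div_le_iff₀ hZpos] at h
  nlinarith

lemma card_lt_sum_range_gap_mul_le {G : Type*} [Fintype G] [AddGroupWithOne G] {y : G → ℝ}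
    (hy : ∑ i, gap y i ≤ 1) (k : ℕ) (r : ℝ) :
    #{i | r < ∑ l ∈ range k, gap y (i + l)} * r ≤ k := by
  have hwindow : ∀ i, 0 ≤ ∑ l ∈ range k, gap y (i + l) :=
    fun i => sum_nonneg fun l _ => gap_nonneg y _
  calc #{i | r < ∑ l ∈ range k, gap y (i + l)} * r
      ≤ ∑ i ∈ {i | r < ∑ l ∈ range k, gap y (i + l)}, ∑ l ∈ range k, gap y (i + l) := by
        rw [← nsmul_eq_mul]
        exact card_nsmul_le_sum _ _ _ fun i hi => (mem_filter.1 hi).2.le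
    _ ≤ ∑ i, ∑ l ∈ range k, gap y (i + l) :=
        sum_le_sum_of_subset_of_nonneg (subset_univ _) fun i _ _ => hwindow i
    _ = k * ∑ i, gap y i := sum_sum_range_gap y k
    _ ≤ k := mul_le_of_le_one_right (Nat.cast_nonneg k) hy


lemma exists_card_gap_eq_sum_range_gap_le {G : Type*} [Fintype G] [Nonempty G] [AddGroupWithOne G]
    {y : G → ℝ} (hsum : ∑ i, gap y i ≤ 1) {Z : ℕ} (hZ : #(univ.image (gap y)) ≤ Z) (m : ℕ) :
    ∃ d, 0 ≤ d ∧ (Fintype.card G : ℝ) * d ≤ Z ∧ ∃ A : Finset G,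
      (Fintype.card G : ℝ) / (2 * Z) ≤ #A ∧
      ∀ i ∈ A, gap y i = d ∧ ∑ l ∈ range m, gap y (i + l) ≤ 2 * m * Z / Fintype.card G := by
  set N : ℝ := (Fintype.card G : ℝ)
  have hNpos : 0 < N := by positivity
  have hZpos : (0 : ℝ) < Z := by
    exact_mod_cast (card_pos.2 (univ_nonempty.image (gap y))).trans_le hZ
  obtain ⟨d, hd0, hdN, hdA⟩ := exists_frequent_value_of_sum_le_one (gap_nonneg y) hsum hZ
  set A : Finset G := {i | gap y i = d ∧ ∑ l ∈ range m, gap y (i + l) ≤ 2 * m * Z / N}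
  refine ⟨d, hd0, hdN, A, ?_, fun i hi => (mem_filter.1 hi).2⟩
  set B : Finset G := {i | 2 * m * Z / N < ∑ l ∈ range m, gap y (i + l)}
  have hB : (#B : ℝ) ≤ N / (2 * Z) := by
    rcases m.eq_zero_or_pos with rfl | hm
    · simp [B, hNpos.le, hZpos.le, div_nonneg]
    have h := card_lt_sum_range_gap_mul_le hsum m (2 * m * Z / N)
    rw [mul_div_assoc', div_le_iff₀ hNpos] at h
    rw [le_div_iff₀ (by positivity)]
    refine le_of_mul_le_mul_left ?_ (by positivity : (0 : ℝ) < m)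
    linarith
  have hsplit : (#{i | gap y i = d} : ℝ) ≤ #A + #B := by
    norm_cast
    refine (card_le_card fun i hi => ?_).trans (card_union_le _ _)
    by_cases hiB : i ∈ B
    · exact mem_union_right _ hiB
    · simp_all [A, B]
  have hhalf : N / Z = N / (2 * Z) + N / (2 * Z) := by field_simp; ring
  linarith

open Matrix Fin.CommRing in
lemma exists_card_boxTuples_jump {n k Z : ℕ} (hk : k + 1 < n + 1) {y : Fin (n + 1) → ℝ}
    (hy : Monotone y) (hy0 : ∀ i, 0 ≤ y i) (hy1 : ∀ i, y i < 1)
    (hZ : #(univ.image (gap y)) ≤ Z) :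
    ∃ t ∈ Set.Icc (0 : ℝ) Z, ∀ a b : ℝ, a < t → t ≤ b →
      #(boxTuples y (k + 1) fun l => vecCons a (fun _ => 2 * (k + 1) * Z) l / (n + 1 : ℕ)) +
          ((n + 1 : ℕ) : ℝ) / (2 * Z) ≤
        #(boxTuples y (k + 1) fun l => vecCons b (fun _ => 2 * (k + 1) * Z) l / (n + 1 : ℕ)) := by
  have hNpos : (0 : ℝ) < (n + 1 : ℕ) := by positivity
  obtain ⟨d, hd0, hdN, A, hAcard, hA⟩ :=
    exists_card_gap_eq_sum_range_gap_le (sum_gap_le_one hy hy0 hy1) hZ (k + 1)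
  rw [Fintype.card_fin] at hdN hAcard hA
  refine ⟨(n + 1 : ℕ) * d, ⟨by positivity, hdN⟩, fun a b ha hb => ?_⟩
  have hjump := card_boxTuples_add_card_le (y := y) hk
    (s := fun l => vecCons a (fun _ => 2 * (k + 1) * Z) l / (n + 1 : ℕ))
    (s' := fun l => vecCons b (fun _ => 2 * (k + 1) * Z) l / (n + 1 : ℕ))
    (fun l => by
      refine Fin.cases ?_ (fun j => ?_) l
      · simp only [cons_val_zero]; gcongr; linarith
      · simp only [cons_val_succ, le_refl]) A fun i hi => by
      obtain ⟨hgi, hwindow⟩ := hA i hi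
      simp only [cons_val_zero, cons_val_succ, hgi]
      refine ⟨(div_lt_iff₀ hNpos).2 (by linarith), (le_div_iff₀ hNpos).2 (by linarith),
        fun _ => ?_⟩
      push_cast at hwindow ⊢
      exact hwindow
  have hjumpR := (Nat.cast_le (α := ℝ)).2 hjump
  rw [Nat.cast_add] at hjumpR
  linarith

open Matrix in
lemma AtMostZGaps.exists_Rcorr_jump {x : ℕ → ℝ} (hx : ∀ n, x n ∈ Set.Ico (0 : ℝ) 1)
    {N Z k : ℕ} (h : AtMostZGaps x N Z) (hN : k + 2 ≤ N) :
    ∃ t ∈ Set.Icc (0 : ℝ) Z, ∀ a b : ℝ, a < t → t ≤ b →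
      Rcorr x (k + 1) 1 (vecCons a fun _ => 2 * (k + 1) * Z) N + 1 / (2 * Z) ≤
        Rcorr x (k + 1) 1 (vecCons b fun _ => 2 * (k + 1) * Z) N := by
  obtain ⟨n, rfl⟩ : ∃ n, N = n + 1 := ⟨N - 1, by omega⟩
  obtain ⟨σ, hσ, hσZ⟩ := h.exists_monotone
  obtain ⟨t, ht, hjump⟩ := exists_card_boxTuples_jump (k := k) (by omega) hσ
    (fun i => (hx _).1) (fun i => (hx _).2) hσZ
  refine ⟨t, ht, fun a b ha hb => ?_⟩
  have hNpos : (0 : ℝ) < (n + 1 : ℕ) := by positivity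
  have key := hjump a b ha hb
  rw [card_boxTuples_comp_perm (y := fun j : Fin (n + 1) => x j),
    card_boxTuples_comp_perm (y := fun j : Fin (n + 1) => x j)] at key
  rw [Rcorr_one_eq, Rcorr_one_eq, div_add' _ _ _ hNpos.ne', div_le_div_iff_of_pos_right hNpos]
  linarith [show 1 / (2 * (Z : ℝ)) * (n + 1 : ℕ) = (n + 1 : ℕ) / (2 * Z) by ring]

open Matrix in
lemma prod_two_mul_vecCons {k : ℕ} (a S : ℝ) :
    ∏ i, 2 * vecCons a (fun _ : Fin k => S) i = 2 * (2 * S) ^ k * a := by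
  rw [Fin.prod_univ_succ]
  simp
  ring

lemma le_mul_sub_max_of_frequently {R : ℝ → ℕ → ℝ} {C c a b : ℝ} (hR : ∀ a N, 0 ≤ R a N)
    (hlim : ∀ a > 0, Tendsto (R a) atTop (nhds (C * a))) (hb : 0 < b)
    (h : ∃ᶠ N in atTop, R a N + c ≤ R b N) : c ≤ C * (b - max a 0) := by
  rcases le_or_gt a 0 with ha | ha
  · rw [max_eq_right ha, sub_zero]
    exact ge_of_tendsto_of_frequently (hlim b hb) (h.mono fun N hN => by linarith [hR a N])
  · rw [max_eq_left ha.le, mul_sub]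
    exact ge_of_tendsto_of_frequently ((hlim b hb).sub (hlim a ha))
      (h.mono fun N hN => by linarith)

lemma not_forall_tendsto_mul_of_frequently_jump {R : ℝ → ℕ → ℝ} {C c T : ℝ} {P : ℕ → Prop}
    {t : ℕ → ℝ} (hR : ∀ a N, 0 ≤ R a N) (hc : 0 < c) (hP : ∃ᶠ N in atTop, P N)
    (ht : ∀ N, P N → t N ∈ Set.Icc 0 T ∧ ∀ a b, a < t N → t N ≤ b → R a N + c ≤ R b N) :
    ¬ ∀ a > 0, Tendsto (R a) atTop (nhds (C * a)) := by
  intro hlim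
  obtain ⟨t₀, ht₀, hclus⟩ := isCompact_Icc.exists_mapClusterPt_of_frequently
    (l := atTop ⊓ Filter.principal {N | P N}) (f := t)
    (frequently_inf_principal.2 (hP.mono fun N hN => ⟨hN, (ht N hN).1⟩))
  have hbound (ε : ℝ) (hε : 0 < ε) : c ≤ max C 0 * (2 * ε) := by
    have h := frequently_inf_principal.1 <| mapClusterPt_iff_frequently.1 hclus _ <|
      Ioo_mem_nhds (sub_lt_self t₀ hε) (lt_add_of_pos_right t₀ hε)
    have hwidth : 0 ≤ t₀ + ε - max (t₀ - ε) 0 :=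
      sub_nonneg.2 (max_le (by linarith) (by linarith [ht₀.1]))
    calc c ≤ C * (t₀ + ε - max (t₀ - ε) 0) := le_mul_sub_max_of_frequently hR hlim
          (by linarith [ht₀.1]) (h.mono fun N ⟨hN, htN⟩ => (ht N hN).2 _ _ htN.1 htN.2.le)
      _ ≤ max C 0 * (t₀ + ε - max (t₀ - ε) 0) := by gcongr; exact le_max_left C 0
      _ ≤ max C 0 * (2 * ε) := by gcongr; linarith [le_max_left (t₀ - ε) 0]
  have hcont : Continuous fun ε : ℝ => max C 0 * (2 * ε) := by fun_prop
  have h0 : c ≤ max C 0 * (2 * 0) := ge_of_tendsto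
    (hcont.continuousWithinAt (s := Set.Ioi 0)).tendsto (eventually_nhdsWithin_of_forall hbound)
  linarith

theorem stmt10_general (x : ℕ → ℝ) (hx : ∀ n, x n ∈ Set.Ico (0 : ℝ) 1)
    (Z : ℕ)
    (hgaps : ∀ M : ℕ, ∃ N : ℕ, M ≤ N ∧ 1 ≤ N ∧ AtMostZGaps x N Z)
    (m : ℕ) (hm : 1 ≤ m) :
    ¬ (∀ s : Fin m → ℝ, (∀ i, 0 < s i) →
        Tendsto (fun N => Rcorr x m 1 s N) atTop (nhds (∏ i, 2 * s i))) := by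
  intro H
  obtain ⟨k, rfl⟩ : ∃ k, m = k + 1 := ⟨m - 1, by omega⟩
  obtain ⟨N₀, -, hN₀, hg₀⟩ := hgaps 0
  have hZ : (0 : ℝ) < Z := by exact_mod_cast hg₀.pos hN₀
  have hgood : ∃ᶠ N in atTop, k + 2 ≤ N ∧ AtMostZGaps x N Z :=
    frequently_atTop.2 fun M => by
      obtain ⟨N, hMN, -, hN⟩ := hgaps (max M (k + 2))
      exact ⟨N, by omega, by omega, hN⟩
  choose! t ht using fun N (hN : k + 2 ≤ N ∧ AtMostZGaps x N Z) =>
    hN.2.exists_Rcorr_jump hx hN.1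
  refine not_forall_tendsto_mul_of_frequently_jump (C := 2 * (2 * (2 * (k + 1) * Z)) ^ k)
    (fun a N => by unfold Rcorr; positivity) (by positivity) hgood ht fun a ha => ?_
  have h := H (Matrix.vecCons a fun _ => 2 * (k + 1) * Z) fun i => by
    refine Fin.cases ?_ (fun j => ?_) i <;> simp [ha, hZ, Nat.cast_add_one_pos]
  rwa [prod_two_mul_vecCons] at h

/-- if there exist `Z ∈ ℕ`, `γ > 0` and infinitely many `N` such that the point
set `x_1,…,x_N` has at most `Z` distinct gap lengths, then for every `k ≥ 2` the sequence does
not have `(k,1)`-Poissonian box correlations. -/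
theorem stmt10 (x : ℕ → ℝ) (hx : ∀ n, x n ∈ Set.Ico (0 : ℝ) 1)
    (Z : ℕ) (γ : ℝ) (hγ : 0 < γ)
    (hgaps : ∀ M : ℕ, ∃ N : ℕ, M ≤ N ∧ 1 ≤ N ∧ AtMostZGaps x N Z)
    (m : ℕ) (hm : 1 ≤ m) :
    ¬ (∀ s : Fin m → ℝ, (∀ i, 0 < s i) →
        Tendsto (fun N => Rcorr x m 1 s N) atTop (nhds (∏ i, 2 * s i))) :=
  stmt10_general x hx Z hgaps m hm
end

section
/- Let (x_n) be a sequence in [0,1), k ≥ 2, β ∈ (0,1], s_1,...,s_{k-1} > 0, and N ≥ k with max_l s_l/(2N^β) ≤ 1/4. Then ∫_{[0,1]^{k-1}} G_β · H_β dt_1⋯dt_{k-1} equals N^{-(k-2(k-1)β)} times [ ∑ over distinct k-tuples (i_1,...,i_k) of ∏_{l=1}^{k-1} max(0, s_l/N^β − ‖x_{i_l} − x_{i_k}‖) + ∑ over distinct (k−1)-tuples (i_1,...,i_{k-1}) ∑_{j=1}^{k-1} (s_j/N^β) ∏_{l ≠ j} max(0, s_l/N^β − ‖x_{i_j} − x_{i_l}‖)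 ]. -/
/-!
Expanding the product, `G_β · H_β` is a sum, over injective `(k-1)`-tuples `i` and indices `j`,
of the indicator that every `t_l` lies within `r_l = s_l / (2N^β)` of both `x_{i_l}` and `x_j` on
`ℝ/ℤ`. Its integral over the cube factorises over the coordinates, and each factor is the length
`max(0, 2 r_l - ‖x_{i_l} - x_j‖)` of the intersection of two arcs of radius `r_l ≤ 1/4`.
Splitting the sum over `j` according to whether `j` is a new index or one of the `i_l` gives the
sum over injective `k`-tuples and the diagonal sum, in which the `l`-th factor is `2 r_l`.
-/

open MeasureTheory Filter
open scoped Classical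

/-- `G_β(s_1,…,s_{k-1},t_1,…,t_{k-1},N)` with `k = m+1`:
`N^{-(k-1-(k-1)β)}·#{distinct (i_1,…,i_{k-1}), i_j ≤ N : ‖x_{i_l} - t_l‖ ≤ s_l/(2N^β) ∀ l}`. -/
noncomputable def Gfun (x : ℕ → ℝ) (m : ℕ) (β : ℝ) (s : Fin m → ℝ) (t : Fin m → ℝ)
    (N : ℕ) : ℝ :=
  ((Finset.univ.filter (fun i : Fin m → Fin N =>
      Function.Injective i ∧
        ∀ l : Fin m, nid (x (i l) - t l) ≤ s l / (2 * (N : ℝ) ^ β))).card : ℝ)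
    / (N : ℝ) ^ ((m : ℝ) - m * β)

/-- `H_β(s_1,…,s_{k-1},t_1,…,t_{k-1},N)` with `k = m+1`:
`N^{-(1-(k-1)β)}·#{i ≤ N : ‖x_i - t_l‖ ≤ s_l/(2N^β) ∀ l}`. -/
noncomputable def Hfun (x : ℕ → ℝ) (m : ℕ) (β : ℝ) (s : Fin m → ℝ) (t : Fin m → ℝ)
    (N : ℕ) : ℝ :=
  (((Finset.range N).filter (fun i =>
      ∀ l : Fin m, nid (x i - t l) ≤ s l / (2 * (N : ℝ) ^ β))).card : ℝ)
    / (N : ℝ) ^ ((1 : ℝ) - m * β)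

open Metric Set Function

theorem Real.volume_closedBall_inter_closedBall (x y r : ℝ) :
    volume (closedBall x r ∩ closedBall y r) = ENNReal.ofReal (2 * r - |x - y|) := by
  rw [Real.closedBall_eq_Icc, Real.closedBall_eq_Icc, Icc_inter_Icc, Real.volume_Icc,
    ← max_sub_min_eq_abs, max_sub_sub_right, min_add_add_right, max_comm, min_comm]
  ring_nf

theorem AddCircle.exists_coe_eq_and_norm_eq_abs {T : ℝ} (a : AddCircle T) :
    ∃ w : ℝ, (w : AddCircle T) = a ∧ ‖a‖ = |w| := by
  obtain ⟨w, rfl⟩ := QuotientAddGroup.mk_surjective a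
  refine ⟨w - round (T⁻¹ * w) * T, ?_, AddCircle.norm_eq T⟩
  rw [QuotientAddGroup.mk_sub, sub_eq_self, ← zsmul_eq_mul, QuotientAddGroup.mk_zsmul,
    AddCircle.coe_period, smul_zero]

theorem AddCircle.volume_closedBall_inter_closedBall {T : ℝ} [hT : Fact (0 < T)]
    (a b : AddCircle T) {r : ℝ} (hr : r ≤ T / 4) :
    volume (closedBall a r ∩ closedBall b r) = ENNReal.ofReal (2 * r - ‖a - b‖) := by
  have hT0 := hT.out
  obtain ⟨u, rfl⟩ := QuotientAddGroup.mk_surjective a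
  obtain ⟨w, hw, hnorm⟩ := AddCircle.exists_coe_eq_and_norm_eq_abs ((u : AddCircle T) - b)
  obtain rfl : b = ((u - w : ℝ) : AddCircle T) := by simp [hw]
  have hwT : |w| ≤ T / 2 := by
    simpa [abs_of_pos hT0, ← hnorm] using AddCircle.norm_le_half_period T hT0.ne'
  have hball : (↑) ⁻¹' closedBall (u : AddCircle T) r ∩ Ioc (u - T / 2) (u - T / 2 + T)
      = closedBall u r := by
    rw [AddCircle.coe_real_preimage_closedBall_inter_eq, abs_of_pos hT0,
      if_pos (by linarith), inter_eq_left, Real.closedBall_eq_Icc]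
    · exact fun t ht => ⟨by linarith [ht.1, ht.2], by linarith [ht.1, ht.2]⟩
    · rw [Real.closedBall_eq_Icc, abs_of_pos hT0]
      exact Ioc_subset_Icc_self.trans (Icc_subset_Icc (by linarith) (by linarith))
  -- Since `2 r ≤ T / 2`, only the lift of `b` nearest to `u` can meet `closedBall u r` in more
  -- than a point.
  have hfar : ∀ z : ℤ, z ≠ 0 → volume (closedBall u r ∩ closedBall (u - w + z • T) r) = 0 := by
    intro z hz
    rw [Real.volume_closedBall_inter_closedBall, ENNReal.ofReal_eq_zero, zsmul_eq_mul,
      show u - (u - w + z * T) = w - z * T by ring]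
    have hz1 : (1 : ℝ) ≤ |(z : ℝ)| := by exact_mod_cast Int.one_le_abs hz
    have : T ≤ |w - z * T| + |w| :=
      calc T ≤ |(z : ℝ)| * T := le_mul_of_one_le_left hT0.le hz1
        _ = |w - z * T - w| := by rw [sub_sub_cancel_left, abs_neg, abs_mul, abs_of_pos hT0]
        _ ≤ |w - z * T| + |w| := abs_sub _ _
    linarith
  have hnear : volume (closedBall u r ∩ closedBall (u - w + (0 : ℤ) • T) r)
      = ENNReal.ofReal (2 * r - |w|) := by
    rw [zero_smul, add_zero, Real.volume_closedBall_inter_closedBall, sub_sub_cancel]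
  rw [AddCircle.add_projection_respects_measure T (u - T / 2)
    (measurableSet_closedBall.inter measurableSet_closedBall), preimage_inter,
    inter_right_comm, hball, AddCircle.coe_real_preimage_closedBall_eq_iUnion,
    inter_iUnion, hnorm]
  refine le_antisymm ?_ ?_
  · calc volume (⋃ z : ℤ, closedBall u r ∩ closedBall (u - w + z • T) r)
        ≤ ∑' z : ℤ, volume (closedBall u r ∩ closedBall (u - w + z • T) r) :=
          measure_iUnion_le _
      _ = ENNReal.ofReal (2 * r - |w|) := by rw [tsum_eq_single 0 hfar, hnear]
  · exact hnear ▸ measure_mono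
      (subset_iUnion (fun z : ℤ => closedBall u r ∩ closedBall (u - w + z • T) r) 0)

theorem UnitAddCircle.volume_Icc_inter_preimage {U : Set UnitAddCircle} (hU : MeasurableSet U) :
    volume (Icc (0 : ℝ) 1 ∩ (↑) ⁻¹' U) = volume U := by
  rw [AddCircle.add_projection_respects_measure 1 0 hU, zero_add, inter_comm]
  exact measure_congr (ae_eq_refl _ |>.inter Ioc_ae_eq_Icc.symm)

lemma nid_eq_norm (x : ℝ) : nid x = ‖(x : UnitAddCircle)‖ := UnitAddCircle.norm_eq.symm

lemma nid_sub_comm (a b : ℝ) : nid (a - b) = nid (b - a) := by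
  rw [nid_eq_norm, nid_eq_norm, QuotientAddGroup.mk_sub, QuotientAddGroup.mk_sub, norm_sub_rev]

lemma nid_sub_self (a : ℝ) : nid (a - a) = 0 := by
  rw [sub_self, nid_eq_norm, QuotientAddGroup.mk_zero, norm_zero]

def nidBall (a r : ℝ) : Set ℝ := {t | nid (a - t) ≤ r}

lemma nidBall_eq_preimage_closedBall (a r : ℝ) :
    nidBall a r = (↑) ⁻¹' closedBall (a : UnitAddCircle) r := by
  ext t
  rw [mem_preimage, mem_closedBall, dist_comm, dist_eq_norm, ← QuotientAddGroup.mk_sub,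
    ← nid_eq_norm]
  rfl

lemma measurableSet_nidBall (a r : ℝ) : MeasurableSet (nidBall a r) := by
  rw [nidBall_eq_preimage_closedBall]
  exact measurableSet_closedBall.preimage (by fun_prop)

lemma measureReal_Icc_inter_nidBall_inter_nidBall (a b : ℝ) {r : ℝ} (hr : r ≤ 1 / 4) :
    volume.real (Icc (0 : ℝ) 1 ∩ (nidBall a r ∩ nidBall b r)) = max 0 (2 * r - nid (a - b)) := by
  rw [nidBall_eq_preimage_closedBall, nidBall_eq_preimage_closedBall, ← preimage_inter,
    measureReal_def, UnitAddCircle.volume_Icc_inter_preimage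
      (measurableSet_closedBall.inter measurableSet_closedBall),
    AddCircle.volume_closedBall_inter_closedBall _ _ hr, ENNReal.toReal_ofReal', max_comm,
    nid_eq_norm, QuotientAddGroup.mk_sub]

theorem setIntegral_univ_pi_indicator_one {ι : Type*} [Fintype ι] {X : ι → Type*}
    [∀ i, MeasurableSpace (X i)] (μ : ∀ i, Measure (X i)) [∀ i, SigmaFinite (μ i)]
    (s A : ∀ i, Set (X i)) (hA : ∀ i, MeasurableSet (A i)) :
    ∫ t in Set.univ.pi s, (Set.univ.pi A).indicator 1 t ∂Measure.pi μ
      = ∏ i : ι, (μ i).real (s i ∩ A i) := by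
  rw [integral_indicator_one (MeasurableSet.univ_pi hA), measureReal_def,
    Measure.restrict_apply (MeasurableSet.univ_pi hA), ← pi_inter_distrib, Measure.pi_pi,
    ENNReal.toReal_prod]
  simp_rw [inter_comm (A _)]
  rfl

open Finset in
theorem sum_injective_sum_eq_sum_injective_succ_add {β M : Type*} [Fintype β] [DecidableEq β]
    [AddCommMonoid M] {m : ℕ} (F : (Fin m → β) → β → M) :
    ∑ i ∈ univ.filter (fun i : Fin m → β => Injective i), ∑ b, F i b
      = ∑ i ∈ univ.filter (fun i : Fin (m + 1) → β => Injective i),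
          F (Fin.init i) (i (Fin.last m))
        + ∑ i ∈ univ.filter (fun i : Fin m → β => Injective i), ∑ l, F i (i l) := by
  have hsplit : ∀ i : Fin m → β, Injective i →
      ∑ b, F i b = ∑ b ∈ univ \ univ.image i, F i b + ∑ l, F i (i l) := fun i hi => by
    rw [← sum_sdiff (subset_univ (univ.image i)), sum_image fun a _ b _ h => hi h]
  rw [sum_congr rfl fun i hi => hsplit i (mem_filter.1 hi).2, sum_add_distrib, sum_sigma']
  congr 1
  refine sum_nbij' (fun p => Fin.snoc p.1 p.2) (fun f => ⟨Fin.init f, f (Fin.last m)⟩)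
    (fun p hp => ?_) (fun f hf => ?_) (fun p _ => by simp) (fun f _ => Fin.snoc_init_self f)
    (fun p _ => by simp)
  · simpa [Fin.snoc_injective_iff] using hp
  · have hf' := (mem_filter.1 hf).2
    rw [← Fin.snoc_init_self f, Fin.snoc_injective_iff] at hf'
    simpa using hf'

lemma Gfun_mul_Hfun (x : ℕ → ℝ) (m : ℕ) (β : ℝ) (s t : Fin m → ℝ) (N : ℕ) :
    Gfun x m β s t N * Hfun x m β s t N =
      (∑ i ∈ Finset.univ.filter (fun i : Fin m → Fin N => Injective i), ∑ j ∈ Finset.range N,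
        (Set.univ.pi fun l => nidBall (x (i l)) (s l / (2 * (N : ℝ) ^ β)) ∩
          nidBall (x j) (s l / (2 * (N : ℝ) ^ β))).indicator 1 t)
      / ((N : ℝ) ^ ((m : ℝ) - m * β) * (N : ℝ) ^ ((1 : ℝ) - m * β)) := by
  rw [Gfun, Hfun, div_mul_div_comm, ← Finset.filter_filter, Finset.card_filter,
    Finset.card_filter]
  push_cast
  rw [Finset.sum_mul_sum]
  congr 1
  refine Finset.sum_congr rfl fun i _ => Finset.sum_congr rfl fun j _ => ?_
  rw [ite_zero_mul_ite_zero, one_mul, Set.indicator_apply]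
  simp only [Set.mem_univ_pi, Set.mem_inter_iff, forall_and]
  rfl

lemma integral_Gfun_mul_Hfun (x : ℕ → ℝ) (m : ℕ) (β : ℝ) (s : Fin m → ℝ) {N : ℕ} (hN : 0 < N)
    (hsmall : ∀ l, s l / (2 * (N : ℝ) ^ β) ≤ 1 / 4) :
    ∫ t in Set.univ.pi fun _ : Fin m => Set.Icc (0 : ℝ) 1, Gfun x m β s t N * Hfun x m β s t N
      = (∑ i ∈ Finset.univ.filter (fun i : Fin m → Fin N => Injective i), ∑ j ∈ Finset.range N,
          ∏ l, max 0 (s l / (N : ℝ) ^ β - nid (x (i l) - x j)))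
        / (N : ℝ) ^ ((m + 1 : ℝ) - 2 * m * β) := by
  have : IsFiniteMeasure (volume.restrict (Set.univ.pi fun _ : Fin m => Set.Icc (0 : ℝ) 1)) :=
    isFiniteMeasure_restrict.2 (isCompact_univ_pi fun _ => isCompact_Icc).measure_lt_top.ne
  have hmeas : ∀ (a : Fin m → ℝ) (b : ℝ) (r : Fin m → ℝ),
      MeasurableSet (Set.univ.pi fun l => nidBall (a l) (r l) ∩ nidBall b (r l)) :=
    fun a b r => MeasurableSet.univ_pi fun l =>
      (measurableSet_nidBall _ _).inter (measurableSet_nidBall _ _)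
  simp_rw [Gfun_mul_Hfun]
  rw [integral_div, integral_finsetSum _ fun i _ => integrable_finsetSum _ fun j _ =>
      (integrable_const 1).indicator (hmeas _ _ _),
    ← Real.rpow_add (by exact_mod_cast hN)]
  congr 1
  · refine Finset.sum_congr rfl fun i _ => ?_
    rw [integral_finsetSum _ fun j _ => (integrable_const 1).indicator (hmeas _ _ _)]
    refine Finset.sum_congr rfl fun j _ => ?_
    refine (setIntegral_univ_pi_indicator_one (fun _ => volume) _ _ fun l =>
      (measurableSet_nidBall _ _).inter (measurableSet_nidBall _ _)).trans ?_
    refine Finset.prod_congr rfl fun l _ => ?_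
    rw [measureReal_Icc_inter_nidBall_inter_nidBall _ _ (hsmall l)]
    field_simp
  · ring_nf

lemma sum_injective_sum_range_prod_eq (x : ℕ → ℝ) (m N : ℕ) (g : Fin m → ℝ)
    (hg : ∀ l, 0 ≤ g l) :
    ∑ i ∈ Finset.univ.filter (fun i : Fin m → Fin N => Injective i), ∑ j ∈ Finset.range N,
        ∏ l, max 0 (g l - nid (x (i l) - x j))
      = ∑ i ∈ Finset.univ.filter (fun i : Fin (m + 1) → Fin N => Injective i),
          ∏ l : Fin m, max 0 (g l - nid (x (i l.castSucc) - x (i (Fin.last m))))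
        + ∑ i ∈ Finset.univ.filter (fun i : Fin m → Fin N => Injective i),
          ∑ j : Fin m, g j * ∏ l ∈ Finset.univ.erase j, max 0 (g l - nid (x (i j) - x (i l))) := by
  rw [Finset.sum_congr rfl fun i _ => Finset.sum_range _,
    sum_injective_sum_eq_sum_injective_succ_add fun i (b : Fin N) =>
      ∏ l, max 0 (g l - nid (x (i l) - x b))]
  congr 1
  refine Finset.sum_congr rfl fun i _ => Finset.sum_congr rfl fun j _ => ?_
  rw [← Finset.mul_prod_erase _ _ (Finset.mem_univ j), nid_sub_self, sub_zero,
    max_eq_right (hg j)]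
  exact congrArg _ (Finset.prod_congr rfl fun l _ => by rw [nid_sub_comm])

theorem stmt15_general (x : ℕ → ℝ) (m : ℕ)
    (β : ℝ) (s : Fin m → ℝ) (hs : ∀ i, 0 < s i)
    (N : ℕ) (hN : m + 1 ≤ N) (hsmall : ∀ l, s l / (2 * (N : ℝ) ^ β) ≤ 1 / 4) :
    (∫ t in Set.univ.pi fun _ : Fin m => Set.Icc (0 : ℝ) 1,
        Gfun x m β s t N * Hfun x m β s t N)
      = ((∑ i ∈ Finset.univ.filter (fun i : Fin (m + 1) → Fin N => Function.Injective i),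
            ∏ l : Fin m,
              max 0 (s l / (N : ℝ) ^ β - nid (x (i l.castSucc) - x (i (Fin.last m)))))
          + ∑ i ∈ Finset.univ.filter (fun i : Fin m → Fin N => Function.Injective i),
              ∑ j : Fin m, (s j / (N : ℝ) ^ β) *
                ∏ l ∈ Finset.univ.erase j,
                  max 0 (s l / (N : ℝ) ^ β - nid (x (i j) - x (i l))))
        / (N : ℝ) ^ ((m + 1 : ℝ) - 2 * m * β) := by
  rw [integral_Gfun_mul_Hfun x m β s (by omega) hsmall,
    sum_injective_sum_range_prod_eq x m N _ fun l => div_nonneg (hs l).le (by positivity)]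

/-- `∫_{[0,1]^{k-1}} G_β·H_β dt` equals `N^{-(k-2(k-1)β)}` times the sum of
the two correlation sums described in the paper. -/
theorem stmt15 (x : ℕ → ℝ) (hx : ∀ n, x n ∈ Set.Ico (0 : ℝ) 1) (m : ℕ) (hm : 1 ≤ m)
    (β : ℝ) (hβ : 0 < β) (hβ1 : β ≤ 1) (s : Fin m → ℝ) (hs : ∀ i, 0 < s i)
    (N : ℕ) (hN : m + 1 ≤ N) (hsmall : ∀ l, s l / (2 * (N : ℝ) ^ β) ≤ 1 / 4) :
    (∫ t in Set.univ.pi fun _ : Fin m => Set.Icc (0 : ℝ) 1,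
        Gfun x m β s t N * Hfun x m β s t N)
      = ((∑ i ∈ Finset.univ.filter (fun i : Fin (m + 1) → Fin N => Function.Injective i),
            ∏ l : Fin m,
              max 0 (s l / (N : ℝ) ^ β - nid (x (i l.castSucc) - x (i (Fin.last m)))))
          + ∑ i ∈ Finset.univ.filter (fun i : Fin m → Fin N => Function.Injective i),
              ∑ j : Fin m, (s j / (N : ℝ) ^ β) *
                ∏ l ∈ Finset.univ.erase j,
                  max 0 (s l / (N : ℝ) ^ β - nid (x (i j) - x (i l))))
        / (N : ℝ) ^ ((m + 1 : ℝ) - 2 * m * β) :=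
  stmt15_general x m β s hs N hN hsmall
end
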